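/- Let R = X ⊕ Y be an 8×8 complex matrix where X = (1/√2)·[[A,B],[C,D]] and Y = (1/√2)·[[Y₁,Y₂],[Y₃,Y₄]] are written in 2×2 blocks. If all eight blocks A, B, C, D, Y₁, Y₂, Y₃, Y₄ are diagonal 2×2 matrices, then (R ⊗ I₄)·(I₄ ⊗ R) = (I₄ ⊗ R)·(R ⊗ I₄) as 32×32 matrices, where ⊗ denotes the Kronecker product and I₄ the 4×4 identity matrix (far commutativity). -/

import Mathlib

open Matrix Complex
open scoped Kronecker

/-- Block diagonal sum `X ⊕ Y` of two 4×4 matrices, as an 8×8 matrix. -/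
noncomputable def dSum (X Y : Matrix (Fin 4) (Fin 4) ℂ) : Matrix (Fin 8) (Fin 8) ℂ :=
  Matrix.reindex finSumFinEquiv finSumFinEquiv (Matrix.fromBlocks X 0 0 Y)

/-- A 4×4 matrix assembled from 2×2 blocks, scaled by `1/√2`. -/
noncomputable def blk (A B C D : Matrix (Fin 2) (Fin 2) ℂ) : Matrix (Fin 4) (Fin 4) ℂ :=
  Matrix.reindex finSumFinEquiv finSumFinEquiv
    ((Real.sqrt 2 : ℂ)⁻¹ • Matrix.fromBlocks A B C D)

/-- Far commutativity: `(R ⊗ I₄)(I₄ ⊗ R) = (I₄ ⊗ R)(R ⊗ I₄)` as 32×32 matrices. -/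
def farComm (R : Matrix (Fin 8) (Fin 8) ℂ) : Prop :=
  Matrix.reindex finProdFinEquiv finProdFinEquiv (R ⊗ₖ (1 : Matrix (Fin 4) (Fin 4) ℂ)) *
      Matrix.reindex finProdFinEquiv finProdFinEquiv ((1 : Matrix (Fin 4) (Fin 4) ℂ) ⊗ₖ R) =
    Matrix.reindex finProdFinEquiv finProdFinEquiv ((1 : Matrix (Fin 4) (Fin 4) ℂ) ⊗ₖ R) *
      Matrix.reindex finProdFinEquiv finProdFinEquiv (R ⊗ₖ (1 : Matrix (Fin 4) (Fin 4) ℂ))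

/-- The involution of `Fin 8` that flips "bit 1" of the index. -/
def flip2 : Fin 8 → Fin 8 := ![2,3,0,1,6,7,4,5]

lemma hflip : ∀ p : Fin 8, flip2 p ≠ p := by decide

/-- Two matrices supported on the diagonal and on the graph of fixed-point-free maps
`s1`, `s2` commute, provided the coefficient data is suitably invariant and the maps
commute and have disjoint "directions". -/
lemma mul_comm_of_sparse {n : Type*} [Fintype n] [DecidableEq n]
    (d1 e1 d2 e2 : n → ℂ) (s1 s2 : n → n)
    (h1 : ∀ i, s1 i ≠ i) (h2 : ∀ i, s2 i ≠ i) (h12 : ∀ i, s1 i ≠ s2 i)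
    (hc : ∀ i, s1 (s2 i) = s2 (s1 i)) (h121 : ∀ i, s2 (s1 i) ≠ i)
    (h13 : ∀ i, s2 (s1 i) ≠ s1 i) (h23 : ∀ i, s2 (s1 i) ≠ s2 i)
    (hd2 : ∀ i, d2 (s1 i) = d2 i) (he2 : ∀ i, e2 (s1 i) = e2 i)
    (hd1 : ∀ i, d1 (s2 i) = d1 i) (he1 : ∀ i, e1 (s2 i) = e1 i)
    (M1 M2 : Matrix n n ℂ)
    (hM1 : ∀ i j, M1 i j = if j = i then d1 i else if j = s1 i then e1 i else 0)
    (hM2 : ∀ i j, M2 i j = if j = i then d2 i else if j = s2 i then e2 i else 0) :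
    M1 * M2 = M2 * M1 := by
  ext i j
  rw [Matrix.mul_apply, Matrix.mul_apply]
  have L : ∑ k, M1 i k * M2 k j = d1 i * M2 i j + e1 i * M2 (s1 i) j := by
    have step : ∀ k, M1 i k * M2 k j
        = (if k = i then d1 i * M2 k j else 0) + (if k = s1 i then e1 i * M2 k j else 0) := by
      intro k; rw [hM1]; split_ifs with h h' <;> simp_all [(h1 i).symm]
    rw [Finset.sum_congr rfl (fun k _ => step k), Finset.sum_add_distrib]
    simp [Finset.sum_ite_eq']
  have R : ∑ k, M2 i k * M1 k j = d2 i * M1 i j + e2 i * M1 (s2 i) j := by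
    have step : ∀ k, M2 i k * M1 k j
        = (if k = i then d2 i * M1 k j else 0) + (if k = s2 i then e2 i * M1 k j else 0) := by
      intro k; rw [hM2]; split_ifs with h h' <;> simp_all [(h2 i).symm]
    rw [Finset.sum_congr rfl (fun k _ => step k), Finset.sum_add_distrib]
    simp [Finset.sum_ite_eq']
  rw [L, R, hM1 i j, hM1 (s2 i) j, hM2 i j, hM2 (s1 i) j,
      hd2 i, he2 i, hd1 i, he1 i, hc i]
  have a1 := h1 i; have a2 := h2 i; have a12 := h12 i; have a121 := h121 i
  have a13 := h13 i; have a23 := h23 i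
  clear L R hM1 hM2 hc hd1 hd2 he1 he2 h1 h2 h12 h121 h13 h23
  split_ifs <;> first | ring1 | (exfalso; grind)

lemma s8_0 : (finSumFinEquiv.symm : Fin (4+4) → Fin 4 ⊕ Fin 4) 0 = Sum.inl 0 := by decide
lemma s8_1 : (finSumFinEquiv.symm : Fin (4+4) → Fin 4 ⊕ Fin 4) 1 = Sum.inl 1 := by decide
lemma s8_2 : (finSumFinEquiv.symm : Fin (4+4) → Fin 4 ⊕ Fin 4) 2 = Sum.inl 2 := by decide
lemma s8_3 : (finSumFinEquiv.symm : Fin (4+4) → Fin 4 ⊕ Fin 4) 3 = Sum.inl 3 := by decide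
lemma s8_4 : (finSumFinEquiv.symm : Fin (4+4) → Fin 4 ⊕ Fin 4) 4 = Sum.inr 0 := by decide
lemma s8_5 : (finSumFinEquiv.symm : Fin (4+4) → Fin 4 ⊕ Fin 4) 5 = Sum.inr 1 := by decide
lemma s8_6 : (finSumFinEquiv.symm : Fin (4+4) → Fin 4 ⊕ Fin 4) 6 = Sum.inr 2 := by decide
lemma s8_7 : (finSumFinEquiv.symm : Fin (4+4) → Fin 4 ⊕ Fin 4) 7 = Sum.inr 3 := by decide
lemma s4_0 : (finSumFinEquiv.symm : Fin (2+2) → Fin 2 ⊕ Fin 2) 0 = Sum.inl 0 := by decide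
lemma s4_1 : (finSumFinEquiv.symm : Fin (2+2) → Fin 2 ⊕ Fin 2) 1 = Sum.inl 1 := by decide
lemma s4_2 : (finSumFinEquiv.symm : Fin (2+2) → Fin 2 ⊕ Fin 2) 2 = Sum.inr 0 := by decide
lemma s4_3 : (finSumFinEquiv.symm : Fin (2+2) → Fin 2 ⊕ Fin 2) 3 = Sum.inr 1 := by decide

set_option maxHeartbeats 1000000 in
/-- Entries of `dSum (blk A B C D) (blk Y1 Y2 Y3 Y4)` vanish outside the diagonal and
the graph of `flip2`, when all eight blocks are diagonal. -/
lemma R_vanish (A B C D Y1 Y2 Y3 Y4 : Matrix (Fin 2) (Fin 2) ℂ)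
    (hA : A.IsDiag) (hB : B.IsDiag) (hC : C.IsDiag) (hD : D.IsDiag)
    (hY1 : Y1.IsDiag) (hY2 : Y2.IsDiag) (hY3 : Y3.IsDiag) (hY4 : Y4.IsDiag) :
    ∀ p q : Fin 8, q ≠ p → q ≠ flip2 p →
      dSum (blk A B C D) (blk Y1 Y2 Y3 Y4) p q = 0 := by
  have t : (0 : Fin 2) ≠ 1 := by decide
  have t' : (1 : Fin 2) ≠ 0 := by decide
  have a1 := hA t; have a2 := hA t'; have b1 := hB t; have b2 := hB t'
  have c1 := hC t; have c2 := hC t'; have d1 := hD t; have d2 := hD t'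
  have y11 := hY1 t; have y12 := hY1 t'; have y21 := hY2 t; have y22 := hY2 t'
  have y31 := hY3 t; have y32 := hY3 t'; have y41 := hY4 t; have y42 := hY4 t'
  clear hA hB hC hD hY1 hY2 hY3 hY4 t t'
  intro p q h1 h2
  fin_cases p <;> fin_cases q <;>
    simp_all [dSum, blk, flip2, Matrix.reindex_apply, Matrix.submatrix_apply,
      s8_0, s8_1, s8_2, s8_3, s8_4, s8_5, s8_6, s8_7, s4_0, s4_1, s4_2, s4_3] <;>
    exact absurd (by decide) h2

/-- The equivalence `Fin 8 × Fin 4 ≃ Fin 32`. -/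
def e84 : Fin 8 × Fin 4 ≃ Fin 32 := finProdFinEquiv

/-- The equivalence `Fin 4 × Fin 8 ≃ Fin 32`. -/
def e48 : Fin 4 × Fin 8 ≃ Fin 32 := finProdFinEquiv

/-- The involution of `Fin 32` induced by `flip2` on the left factor of `Fin 8 × Fin 4`. -/
def sL : Fin 32 → Fin 32 := fun i => e84 (flip2 (e84.symm i).1, (e84.symm i).2)

/-- The involution of `Fin 32` induced by `flip2` on the right factor of `Fin 4 × Fin 8`. -/
def sR : Fin 32 → Fin 32 := fun i => e48 ((e48.symm i).1, flip2 (e48.symm i).2)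

lemma kron_left_apply (R : Matrix (Fin 8) (Fin 8) ℂ) (dR eR : Fin 8 → ℂ)
    (hR : ∀ p q, R p q = if q = p then dR p else if q = flip2 p then eR p else 0)
    (i j : Fin 32) :
    (Matrix.reindex finProdFinEquiv finProdFinEquiv
        (R ⊗ₖ (1 : Matrix (Fin 4) (Fin 4) ℂ))) i j
      = if j = i then dR (e84.symm i).1 else if j = sL i then eR (e84.symm i).1 else 0 := by
  obtain ⟨⟨p, a⟩, rfl⟩ := e84.surjective i
  obtain ⟨⟨q, b⟩, rfl⟩ := e84.surjective j
  rw [Matrix.reindex_apply, Matrix.submatrix_apply]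
  have h1 : finProdFinEquiv.symm (e84 (p, a)) = (p, a) := e84.symm_apply_apply (p, a)
  have h2 : finProdFinEquiv.symm (e84 (q, b)) = (q, b) := e84.symm_apply_apply (q, b)
  have hsL : sL (e84 (p, a)) = e84 (flip2 p, a) := by
    simp [sL, Equiv.symm_apply_apply]
  rw [h1, h2, Matrix.kroneckerMap_apply, hsL, Equiv.symm_apply_apply, hR, Matrix.one_apply]
  simp only [Equiv.apply_eq_iff_eq, Prod.mk.injEq]
  have := hflip p
  clear hR h1 h2
  split_ifs <;> first | ring1 | (exfalso; grind)

lemma kron_right_apply (R : Matrix (Fin 8) (Fin 8) ℂ) (dR eR : Fin 8 → ℂ)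
    (hR : ∀ p q, R p q = if q = p then dR p else if q = flip2 p then eR p else 0)
    (i j : Fin 32) :
    (Matrix.reindex finProdFinEquiv finProdFinEquiv
        ((1 : Matrix (Fin 4) (Fin 4) ℂ) ⊗ₖ R)) i j
      = if j = i then dR (e48.symm i).2 else if j = sR i then eR (e48.symm i).2 else 0 := by
  obtain ⟨⟨a, p⟩, rfl⟩ := e48.surjective i
  obtain ⟨⟨b, q⟩, rfl⟩ := e48.surjective j
  rw [Matrix.reindex_apply, Matrix.submatrix_apply]
  have h1 : finProdFinEquiv.symm (e48 (a, p)) = (a, p) := e48.symm_apply_apply (a, p)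
  have h2 : finProdFinEquiv.symm (e48 (b, q)) = (b, q) := e48.symm_apply_apply (b, q)
  have hsR : sR (e48 (a, p)) = e48 (a, flip2 p) := by
    simp [sR, Equiv.symm_apply_apply]
  rw [h1, h2, Matrix.kroneckerMap_apply, hsR, Equiv.symm_apply_apply, hR, Matrix.one_apply]
  simp only [Equiv.apply_eq_iff_eq, Prod.mk.injEq]
  have := hflip p
  clear hR h1 h2
  split_ifs <;> first | ring1 | (exfalso; grind)

lemma sL_ne : ∀ i : Fin 32, sL i ≠ i := by decide
lemma sR_ne : ∀ i : Fin 32, sR i ≠ i := by decide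
lemma sL_ne_sR : ∀ i : Fin 32, sL i ≠ sR i := by decide
lemma sLsR_comm : ∀ i : Fin 32, sL (sR i) = sR (sL i) := by decide
lemma sRsL_ne : ∀ i : Fin 32, sR (sL i) ≠ i := by decide
lemma sRsL_ne_sL : ∀ i : Fin 32, sR (sL i) ≠ sL i := by decide
lemma sRsL_ne_sR : ∀ i : Fin 32, sR (sL i) ≠ sR i := by decide
lemma snd_sL : ∀ i : Fin 32, (e48.symm (sL i)).2 = (e48.symm i).2 := by decide
lemma fst_sR : ∀ i : Fin 32, (e84.symm (sR i)).1 = (e84.symm i).1 := by decide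

theorem farComm_of_all_diag (A B C D Y1 Y2 Y3 Y4 : Matrix (Fin 2) (Fin 2) ℂ)
    (hA : A.IsDiag) (hB : B.IsDiag) (hC : C.IsDiag) (hD : D.IsDiag)
    (hY1 : Y1.IsDiag) (hY2 : Y2.IsDiag) (hY3 : Y3.IsDiag) (hY4 : Y4.IsDiag) :
    farComm (dSum (blk A B C D) (blk Y1 Y2 Y3 Y4)) := by
  set R : Matrix (Fin 8) (Fin 8) ℂ := dSum (blk A B C D) (blk Y1 Y2 Y3 Y4) with hRdef
  have hvanish := R_vanish A B C D Y1 Y2 Y3 Y4 hA hB hC hD hY1 hY2 hY3 hY4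
  set dR : Fin 8 → ℂ := fun p => R p p with hdR
  set eR : Fin 8 → ℂ := fun p => R p (flip2 p) with heR
  have hR : ∀ p q, R p q = if q = p then dR p else if q = flip2 p then eR p else 0 := by
    intro p q
    split_ifs with h h'
    · subst h; rfl
    · subst h'; rfl
    · exact hvanish p q h h'
  unfold farComm
  exact mul_comm_of_sparse
    (fun i => dR (e84.symm i).1) (fun i => eR (e84.symm i).1)
    (fun i => dR (e48.symm i).2) (fun i => eR (e48.symm i).2)
    sL sR sL_ne sR_ne sL_ne_sR sLsR_comm sRsL_ne sRsL_ne_sL sRsL_ne_sR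
    (fun i => congrArg dR (snd_sL i)) (fun i => congrArg eR (snd_sL i))
    (fun i => congrArg dR (fst_sR i)) (fun i => congrArg eR (fst_sR i))
    _ _ (kron_left_apply R dR eR hR) (kron_right_apply R dR eR hR)
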